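/- For H a standard Gaussian, the function y ↦ E[soft(H; y)²] / E[soft'(H; y)] is monotonically nonincreasing in y on (0, ∞). -/

import Mathlib

open MeasureTheory ProbabilityTheory

noncomputable def stdGaussian : Measure ℝ := gaussianReal 0 1

noncomputable def soft (u t : ℝ) : ℝ := Real.sign u * max (|u| - t) 0

noncomputable def soft' (x κ : ℝ) : ℝ := if κ < |x| then 1 else 0
/-!
Write `Q y = ∫ x in Ioi y, φ x` for the Gaussian tail. Since `soft` and `soft'` are even in `x`,
`E[soft(H; y)²] = 2 ((1 + y²) Q - y φ)` and `E[soft'(H; y)] = 2 Q`, so the ratio is `B / Q` with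
`B = (1 + y²) Q - y φ`. From `Q' = -φ` and `B' = 2 (y Q - φ)`, the derivative of `B / Q` has the
sign of `2 y Q² + (y² - 1) Q φ - y φ²`, a quadratic in `Q` that is nonpositive as soon as
`Q ≤ 4 φ / (3 y + √(y² + 8))`, which is Sampford's bound on the Mills ratio.
-/

open Real Set Filter Topology

local notation "φ" => gaussianPDFReal 0 1

lemma gaussianPDFReal_zero_one (x : ℝ) : φ x = (√(2 * π))⁻¹ * exp (-x ^ 2 / 2) := by
  simp [gaussianPDFReal]

lemma gaussianPDFReal_zero_one_abs (x : ℝ) : φ |x| = φ x := by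
  simp only [gaussianPDFReal_zero_one, sq_abs]

lemma hasDerivAt_gaussianPDFReal_zero_one (x : ℝ) : HasDerivAt φ (-x * φ x) x := by
  have h : HasDerivAt (fun x : ℝ => -x ^ 2 / 2) (-x) x :=
    ((hasDerivAt_pow 2 x).neg.div_const 2).congr_deriv (by ring)
  rw [funext gaussianPDFReal_zero_one]
  exact (h.exp.const_mul _).congr_deriv (by ring)

lemma tendsto_pow_mul_gaussianPDFReal_zero_one (n : ℕ) :
    Tendsto (fun x => x ^ n * φ x) atTop (𝓝 0) := by
  have h := ((tendsto_rpow_abs_mul_exp_neg_mul_sq_cocompact (a := 1 / 2) (by norm_num) n).mono_left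
    atTop_le_cocompact).const_mul (√(2 * π))⁻¹
  rw [mul_zero] at h
  refine h.congr' ?_
  filter_upwards [eventually_ge_atTop 0] with x hx
  rw [gaussianPDFReal_zero_one, abs_of_nonneg hx, rpow_natCast]
  ring_nf

noncomputable def normalTail (y : ℝ) : ℝ := ∫ x in Ioi y, φ x

lemma normalTail_pos (y : ℝ) : 0 < normalTail y := by
  refine (setIntegral_pos_iff_support_of_nonneg_ae
    (ae_of_all _ fun x => gaussianPDFReal_nonneg 0 1 x)
    (integrable_gaussianPDFReal 0 1).integrableOn).2 ?_
  rw [Function.support_eq_univ fun x => (gaussianPDFReal_pos 0 1 x one_ne_zero).ne']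
  simp

lemma normalTail_eq_sub (y : ℝ) : normalTail y = normalTail 0 - ∫ x in 0..y, φ x := by
  rw [normalTail, normalTail, ← intervalIntegral.integral_interval_add_Ioi (a := 0) (b := y)
    (integrable_gaussianPDFReal 0 1).integrableOn (integrable_gaussianPDFReal 0 1).integrableOn]
  ring

lemma hasDerivAt_normalTail (y : ℝ) : HasDerivAt normalTail (-φ y) y := by
  rw [funext normalTail_eq_sub]
  exact (intervalIntegral.integral_hasDerivAt_right
    (integrable_gaussianPDFReal 0 1).intervalIntegrable
    (stronglyMeasurable_gaussianPDFReal 0 1).stronglyMeasurableAtFilter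
    (hasDerivAt_gaussianPDFReal_zero_one y).continuousAt).const_sub _

lemma tendsto_normalTail_atTop : Tendsto normalTail atTop (𝓝 0) := by
  have h := (intervalIntegral_tendsto_integral_Ioi 0
    (integrable_gaussianPDFReal 0 1).integrableOn tendsto_id).const_sub (normalTail 0)
  rw [← normalTail, sub_self] at h
  exact h.congr fun y => (normalTail_eq_sub y).symm

lemma setIntegral_Ioi_sq_sub_mul_gaussianPDFReal (y : ℝ) :
    ∫ x in Ioi y, (x - y) ^ 2 * φ x = (1 + y ^ 2) * normalTail y - y * φ y := by
  have hderiv : ∀ x ∈ Ici y, HasDerivAt (fun x => (2 * y - x) * φ x - (1 + y ^ 2) * normalTail x)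
      ((x - y) ^ 2 * φ x) x := fun x _ =>
    ((((hasDerivAt_id x).const_sub (2 * y)).mul (hasDerivAt_gaussianPDFReal_zero_one x)).sub
      ((hasDerivAt_normalTail x).const_mul _)).congr_deriv (by simp only [id]; ring)
  have hlim : Tendsto (fun x => (2 * y - x) * φ x - (1 + y ^ 2) * normalTail x) atTop (𝓝 0) := by
    have := (((tendsto_pow_mul_gaussianPDFReal_zero_one 0).const_mul (2 * y)).sub
      (tendsto_pow_mul_gaussianPDFReal_zero_one 1)).sub
        (tendsto_normalTail_atTop.const_mul (1 + y ^ 2))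
    simp only [pow_zero, pow_one, one_mul, mul_zero, sub_zero] at this
    exact this.congr fun x => by ring
  rw [integral_Ioi_of_hasDerivAt_of_nonneg' hderiv
    (fun x _ => mul_nonneg (sq_nonneg _) (gaussianPDFReal_nonneg 0 1 x)) hlim]
  ring

lemma integral_stdGaussian_indicator_comp_abs {y : ℝ} (hy : 0 ≤ y) (g : ℝ → ℝ) :
    ∫ x, (Ioi y).indicator g |x| ∂stdGaussian = 2 * ∫ x in Ioi y, g x * φ x := by
  have h : ∀ x, φ x • (Ioi y).indicator g |x| = (Ioi y).indicator (fun u => g u * φ u) |x| :=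
    fun x => by rw [indicator_mul_left, gaussianPDFReal_zero_one_abs, smul_eq_mul, mul_comm]
  rw [_root_.stdGaussian, integral_gaussianReal_eq_integral_smul one_ne_zero, funext h,
    integral_comp_abs, setIntegral_indicator measurableSet_Ioi, Ioi_inter_Ioi, max_eq_right hy]

lemma soft_sq_eq_indicator {y : ℝ} (hy : 0 ≤ y) (x : ℝ) :
    soft x y ^ 2 = (Ioi y).indicator (fun u => (u - y) ^ 2) |x| := by
  rcases eq_or_ne x 0 with rfl | hx
  · simp [soft, not_lt.2 hy]
  have hsign : Real.sign x ^ 2 = 1 := by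
    rcases Real.sign_apply_eq_of_ne_zero x hx with h | h <;> simp [h]
  by_cases h : y < |x|
  · simp [soft, h, mul_pow, hsign, max_eq_left (sub_nonneg.2 h.le)]
  · simp [soft, h, max_eq_right (sub_nonpos.2 (not_lt.1 h))]

lemma soft'_eq_indicator (x y : ℝ) : soft' x y = (Ioi y).indicator 1 |x| := by
  simp [soft', indicator]

lemma integral_stdGaussian_soft_sq {y : ℝ} (hy : 0 ≤ y) :
    ∫ x, soft x y ^ 2 ∂stdGaussian = 2 * ((1 + y ^ 2) * normalTail y - y * φ y) := by
  simp only [soft_sq_eq_indicator hy, integral_stdGaussian_indicator_comp_abs hy,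
    setIntegral_Ioi_sq_sub_mul_gaussianPDFReal]

lemma integral_stdGaussian_soft' {y : ℝ} (hy : 0 ≤ y) :
    ∫ x, soft' x y ∂stdGaussian = 2 * normalTail y := by
  simp only [soft'_eq_indicator, integral_stdGaussian_indicator_comp_abs hy, Pi.one_apply, one_mul,
    normalTail]

-- The Mills ratio `normalTail x / φ x` solves `R' = x R - 1`; a supersolution vanishing against `φ`
-- at infinity dominates it.
lemma normalTail_le_mul_of_hasDerivAt {R R' : ℝ → ℝ} {a : ℝ}
    (hR : ∀ x ∈ Ici a, HasDerivAt R (R' x) x) (hR' : ∀ x ∈ Ioi a, R' x ≤ x * R x - 1)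
    (hlim : Tendsto (fun x => R x * φ x) atTop (𝓝 0)) :
    normalTail a ≤ R a * φ a := by
  have hderiv : ∀ x ∈ Ici a, HasDerivAt (fun x => R x * φ x - normalTail x)
      ((R' x - x * R x + 1) * φ x) x := fun x hx =>
    (((hR x hx).mul (hasDerivAt_gaussianPDFReal_zero_one x)).sub
      (hasDerivAt_normalTail x)).congr_deriv (by ring)
  have hderiv_nonpos : ∀ x ∈ Ioi a, (R' x - x * R x + 1) * φ x ≤ 0 := fun x hx =>
    mul_nonpos_of_nonpos_of_nonneg (by linarith [hR' x hx]) (gaussianPDFReal_nonneg 0 1 x)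
  have h := integral_Ioi_of_hasDerivAt_of_nonpos' hderiv hderiv_nonpos
    (by simpa using hlim.sub tendsto_normalTail_atTop)
  linarith [setIntegral_nonpos (μ := volume) measurableSet_Ioi hderiv_nonpos]

lemma pow_three_add_six_mul_le (y : ℝ) : y ^ 3 + 6 * y ≤ √(y ^ 2 + 8) * (y ^ 2 + 2) := by
  have hs := sq_sqrt (by positivity : (0 : ℝ) ≤ y ^ 2 + 8)
  refine (abs_le_of_sq_le_sq' ?_ (by positivity)).2
  rw [mul_pow, hs]
  linarith [show (y ^ 2 + 8) * (y ^ 2 + 2) ^ 2 = (y ^ 3 + 6 * y) ^ 2 + 32 by ring]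

lemma normalTail_mul_le {y : ℝ} (hy : 0 ≤ y) :
    normalTail y * (3 * y + √(y ^ 2 + 8)) ≤ 4 * φ y := by
  have hs (x : ℝ) : √(x ^ 2 + 8) ^ 2 = x ^ 2 + 8 := sq_sqrt (by positivity)
  have hs_pos (x : ℝ) : 0 < √(x ^ 2 + 8) := sqrt_pos.2 (by positivity)
  have hc_pos {x : ℝ} (hx : 0 ≤ x) : 0 < 3 * x + √(x ^ 2 + 8) := by linarith [hs_pos x]
  have hc (x : ℝ) : HasDerivAt (fun x => 3 * x + √(x ^ 2 + 8)) (3 + x / √(x ^ 2 + 8)) x :=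
    (((hasDerivAt_id x).const_mul 3).add (((hasDerivAt_pow 2 x).add_const 8).sqrt
      (by positivity))).congr_deriv (by field_simp; ring)
  have h := normalTail_le_mul_of_hasDerivAt (a := y) (R := fun x => 4 / (3 * x + √(x ^ 2 + 8)))
    (fun x hx => (hasDerivAt_const x 4).div (hc x) (hc_pos (hy.trans hx)).ne') ?_ ?_
  · rwa [div_mul_eq_mul_div, le_div_iff₀ (hc_pos hy)] at h
  · intro x hx
    have hx : 0 ≤ x := hy.trans hx.le
    have := hc_pos hx
    rw [div_le_iff₀ (by positivity)]
    field_simp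
    nlinarith [pow_three_add_six_mul_le x, hs x, hs_pos x]
  · have hc_top : Tendsto (fun x => 3 * x + √(x ^ 2 + 8)) atTop atTop :=
      tendsto_atTop_mono (fun x => le_add_of_nonneg_right (sqrt_nonneg _))
        (tendsto_id.const_mul_atTop three_pos)
    simpa using (tendsto_const_nhds (x := (4 : ℝ))).div_atTop hc_top |>.mul
      (tendsto_pow_mul_gaussianPDFReal_zero_one 0)

lemma quadratic_nonpos_of_mul_le {y q p : ℝ} (hy : 0 ≤ y) (hq : 0 ≤ q) (hp : 0 < p)
    (h : q * (3 * y + √(y ^ 2 + 8)) ≤ 4 * p) :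
    2 * y * q ^ 2 + (y ^ 2 - 1) * q * p - y * p ^ 2 ≤ 0 := by
  set c := 3 * y + √(y ^ 2 + 8)
  have hc : 0 < c := by positivity
  have hpoly : 32 * y + 4 * (y ^ 2 - 1) * c - y * c ^ 2 ≤ 0 := by
    have hs := sq_sqrt (by positivity : (0 : ℝ) ≤ y ^ 2 + 8)
    linear_combination 2 * pow_three_add_six_mul_le y - y * hs
  -- Since `P = q * c` lies in `[0, 4 * p]`, the quadratic scaled by `4 * p * c ^ 2`
  -- splits into nonpositive terms.
  set P := q * c
  have hP : 0 ≤ P := by positivity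
  have key : 4 * p * c ^ 2 * (2 * y * q ^ 2 + (y ^ 2 - 1) * q * p - y * p ^ 2) =
      P * p ^ 2 * (32 * y + 4 * (y ^ 2 - 1) * c - y * c ^ 2) - y * p ^ 2 * c ^ 2 * (4 * p - P)
        - 8 * p * y * P * (4 * p - P) := by ring
  have : P * p ^ 2 * (32 * y + 4 * (y ^ 2 - 1) * c - y * c ^ 2) ≤ 0 :=
    mul_nonpos_of_nonneg_of_nonpos (by positivity) hpoly
  have : 0 ≤ y * p ^ 2 * c ^ 2 * (4 * p - P) := mul_nonneg (by positivity) (by linarith)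
  have : 0 ≤ 8 * p * y * P * (4 * p - P) := mul_nonneg (by positivity) (by linarith)
  exact nonpos_of_mul_nonpos_right (by rw [key]; linarith) (by positivity : 0 < 4 * p * c ^ 2)

lemma antitoneOn_div_normalTail :
    AntitoneOn (fun y => ((1 + y ^ 2) * normalTail y - y * φ y) / normalTail y) (Ici 0) := by
  have hratio (y : ℝ) : HasDerivAt (fun y => ((1 + y ^ 2) * normalTail y - y * φ y) / normalTail y)
      (((2 * y * normalTail y - 2 * φ y) * normalTail y
        - ((1 + y ^ 2) * normalTail y - y * φ y) * -φ y) / normalTail y ^ 2) y :=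
    (((((hasDerivAt_pow 2 y).const_add 1).mul (hasDerivAt_normalTail y)).sub
      ((hasDerivAt_id y).mul (hasDerivAt_gaussianPDFReal_zero_one y))).congr_deriv
        (by simp only [id]; ring)).div (hasDerivAt_normalTail y) (normalTail_pos y).ne'
  refine antitoneOn_of_hasDerivWithinAt_nonpos (convex_Ici 0)
    (fun y _ => (hratio y).continuousAt.continuousWithinAt) (fun y _ => (hratio y).hasDerivWithinAt)
    fun y hy => div_nonpos_of_nonpos_of_nonneg ?_ (sq_nonneg _)
  rw [interior_Ici] at hy
  have := quadratic_nonpos_of_mul_le hy.le (normalTail_pos y).le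
    (gaussianPDFReal_pos 0 1 y one_ne_zero) (normalTail_mul_le hy.le)
  linarith

theorem soft_ratio_antitone :
    AntitoneOn
      (fun y => (∫ x, (soft x y)^2 ∂stdGaussian) / (∫ x, soft' x y ∂stdGaussian))
      (Set.Ioi 0) := by
  refine (antitoneOn_div_normalTail.mono Ioi_subset_Ici_self).congr fun y (hy : 0 < y) => ?_
  rw [integral_stdGaussian_soft_sq hy.le, integral_stdGaussian_soft' hy.le,
    mul_div_mul_left _ _ two_ne_zero]
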